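/- Let (M_n, S_n)_{n≥0} be an MRW. The following are equivalent: (a) (M_n, S_n)_{n≥0} is null-homologous; (b) the embedded random walk (S_{τ_n(i)})_{n≥0} has zero increments (i.e. S_{τ_n(i)} = 0 P_i-a.s. for all n) for some i ∈ S; (c) (S_{τ_n(i)})_{n≥0} has zero increments for all i ∈ S. -/

import Mathlib

open MeasureTheory Filter Set ENNReal
open scoped Classical

noncomputable section

/-- A real sequence oscillates: its `limsup` (computed in `EReal`) is `+∞` and its
`liminf` is `-∞`. -/
def OscSeq (u : ℕ → ℝ) : Prop :=
  Filter.limsup (fun n => (u n : EReal)) Filter.atTop = ⊤ ∧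
    Filter.liminf (fun n => (u n : EReal)) Filter.atTop = ⊥

/-- A **Markov random walk** `(M_n, S_n)_{n ≥ 0}` with countable, irreducible, positive
recurrent driving chain `M` on the state space `𝕊`, with transition probabilities `p`,
stationary distribution `π`, and conditionally independent increments `X` whose conditional
law given the driving chain is governed by the stochastic kernel `K` from `𝕊²` to `ℝ`.
`P i` is the law of the whole walk given `M 0 = i`.  The field `pathLaw` prescribes all
finite-dimensional distributions; `recurrent` says that from any starting state every state
is visited infinitely often a.s. (irreducibility and recurrence), and `posRec` says that the
first return time to any state has finite mean (positive recurrence). -/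
structure MRW (𝕊 : Type*) (Ω : Type*) [Countable 𝕊] [MeasurableSpace 𝕊]
    [MeasurableSingletonClass 𝕊] [MeasurableSpace Ω] where
  P : 𝕊 → Measure Ω
  isProb : ∀ i, IsProbabilityMeasure (P i)
  M : ℕ → Ω → 𝕊
  X : ℕ → Ω → ℝ
  measM : ∀ n, Measurable (M n)
  measX : ∀ n, Measurable (X n)
  p : 𝕊 → 𝕊 → ℝ≥0∞
  π : 𝕊 → ℝ≥0∞
  K : 𝕊 → 𝕊 → Measure ℝ
  Kprob : ∀ i j, IsProbabilityMeasure (K i j)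
  pathLaw : ∀ (i : 𝕊) (n : ℕ) (path : ℕ → 𝕊) (B : ℕ → Set ℝ),
    (∀ k, MeasurableSet (B k)) →
    P i {ω | (∀ k ≤ n, M k ω = path k) ∧ ∀ k, 1 ≤ k → k ≤ n → X k ω ∈ B k} =
      (if path 0 = i then 1 else 0) *
        ∏ k ∈ Finset.range n, (p (path k) (path (k + 1)) * K (path k) (path (k + 1)) (B (k + 1)))
  recurrent : ∀ i j, P i {ω | ∀ N, ∃ n ≥ N, M n ω = j} = 1
  πpos : ∀ i, 0 < π i
  πsum : ∑' i, π i = 1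
  πstat : ∀ j, ∑' i, π i * p i j = π j
  posRec : ∀ i, ∫⁻ ω, (↑(sInf {n : ℕ | 1 ≤ n ∧ M n ω = i}) : ℝ≥0∞) ∂P i < ⊤

namespace MRW

variable {𝕊 : Type*} {Ω : Type*} [Countable 𝕊] [MeasurableSpace 𝕊]
  [MeasurableSingletonClass 𝕊] [MeasurableSpace Ω] (W : MRW 𝕊 Ω)

/-- The additive part: `S n = X 1 + ⋯ + X n`, `S 0 = 0`. -/
def S (n : ℕ) (ω : Ω) : ℝ := ∑ k ∈ Finset.range n, W.X (k + 1) ω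

/-- The successive return times `τ n i` of the driving chain to the state `i`
(`τ 0 i = 0`); a.s. well defined by positive recurrence. -/
def τ (i : 𝕊) : ℕ → Ω → ℕ
  | 0, _ => 0
  | n + 1, ω => sInf {k : ℕ | τ i n ω < k ∧ W.M k ω = i}

/-- The stationary law `P_π = ∑ i, π i • P i` of the walk. -/
def Pπ : Measure Ω := Measure.sum fun i => W.π i • W.P i

/-- The MRW is *null-homologous* if `X n = g (M n) - g (M (n-1))` `P_π`-a.s. for some
function `g` on the state space. -/
def NullHomologous : Prop :=
  ∃ g : 𝕊 → ℝ, ∀ n : ℕ, 1 ≤ n → ∀ᵐ ω ∂W.Pπ, W.X n ω = g (W.M n ω) - g (W.M (n - 1) ω)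

/-- The MRW is *nontrivial* if it is not null-homologous. -/
def IsNontrivial : Prop := ¬W.NullHomologous

/-- Positive divergence: `S n → ∞` a.s. (under every `P i`). -/
def PosDiv : Prop := ∀ i, ∀ᵐ ω ∂W.P i, Tendsto (fun n => W.S n ω) atTop atTop

/-- Negative divergence: `S n → -∞` a.s. (under every `P i`). -/
def NegDiv : Prop := ∀ i, ∀ᵐ ω ∂W.P i, Tendsto (fun n => W.S n ω) atTop atBot

/-- Oscillation: `limsup S n = ∞` and `liminf S n = -∞` a.s. (under every `P i`). -/
def OscDiv : Prop := ∀ i, ∀ᵐ ω ∂W.P i, OscSeq fun n => W.S n ω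

/-- `S_{τ(i)}`, the first-cycle increment of the random walk embedded at `i`. -/
def Sτ (i : 𝕊) (ω : Ω) : ℝ := W.S (W.τ i 1 ω) ω

/-- `S_{τ(i)}⁺`. -/
def Sτpos (i : 𝕊) (ω : Ω) : ℝ := max (W.Sτ i ω) 0

/-- `S_{τ(i)}⁻`. -/
def Sτneg (i : 𝕊) (ω : Ω) : ℝ := max (-W.Sτ i ω) 0

/-- `A_i(x) = E_i (S_{τ(i)}⁺ ∧ x) - E_i (S_{τ(i)}⁻ ∧ x)`. -/
def A (i : 𝕊) (x : ℝ) : ℝ :=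
  ∫ ω, min (W.Sτpos i ω) x ∂W.P i - ∫ ω, min (W.Sτneg i ω) x ∂W.P i

/-- `A_i(x) > 0` for all sufficiently large `x`. -/
def AUltPos (i : 𝕊) : Prop := ∃ x₀ : ℝ, ∀ x ≥ x₀, 0 < W.A i x

/-- The function `J_i`:  `J_i 0 = 1` and, for `x > 0`,
`J_i x = x / E_i (S_{τ(i)}⁺ ∧ x)` if `P i (S_{τ(i)} > 0) > 0`, and `J_i x = x` otherwise. -/
def J (i : 𝕊) (x : ℝ) : ℝ :=
  if x = 0 then 1
  else if 0 < W.P i {ω | 0 < W.Sτ i ω} then x / ∫ ω, min (W.Sτpos i ω) x ∂W.P i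
  else x

/-- The function `J_i` for the reflected walk `(M_n, -S_n)`:  it has
`E_i (S_{τ(i)}⁻ ∧ x)` in the denominator. -/
def Jrefl (i : 𝕊) (x : ℝ) : ℝ :=
  if x = 0 then 1
  else if 0 < W.P i {ω | W.Sτ i ω < 0} then x / ∫ ω, min (W.Sτneg i ω) x ∂W.P i
  else x

/-- `D^i = max_{0 < k ≤ τ(i)} S_k⁻`, the maximal downward excursion during the first
`i`-cycle (its `P i`-distribution is that of the generic copy `D^i`).  Including the index
`k = 0` is harmless since `S_0⁻ = 0`. -/
def D (i : 𝕊) (ω : Ω) : ℝ :=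
  (Finset.range (W.τ i 1 ω + 1)).sup' Finset.nonempty_range_add_one fun k => max (-W.S k ω) 0

/-- The tail `V_i^α((x,∞)) = E_i (∑_{n=1}^{τ(i)} 1_{S_n⁻ > x})^α` of the excursion
measure `V_i^α`. -/
def Vtail (i : 𝕊) (α : ℝ) (x : ℝ) : ℝ≥0∞ :=
  ∫⁻ ω,
    ((((Finset.Icc 1 (W.τ i 1 ω)).filter fun n => x < max (-W.S n ω) 0).card : ℝ≥0∞) ^ α)
    ∂W.P i

/-- `V` is (a version of) the excursion measure `V_i^α`: it is carried by `(0,∞)` and has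
the prescribed tails `V((x,∞)) = E_i (∑_{n=1}^{τ(i)} 1_{S_n⁻ > x})^α` for `x ≥ 0`. -/
def IsV (i : 𝕊) (α : ℝ) (V : Measure ℝ) : Prop :=
  V (Set.Iic 0) = 0 ∧ ∀ x : ℝ, 0 ≤ x → V (Set.Ioi x) = W.Vtail i α x

/-- `∫ f dV_i^α < ∞`. -/
def VInt (i : 𝕊) (α : ℝ) (f : ℝ → ℝ≥0∞) : Prop :=
  ∃ V : Measure ℝ, W.IsV i α V ∧ ∫⁻ x, f x ∂V < ⊤

/-- First time `n ≥ 1` at which `A n` holds (`⊤` if there is none). -/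
def firstTime (A : ℕ → Ω → Prop) (ω : Ω) : ℕ∞ :=
  sInf {e : ℕ∞ | ∃ n : ℕ, e = n ∧ 1 ≤ n ∧ A n ω}

/-- The level `x` first passage time `σ^>(x) = inf {n ≥ 1 : S n > x}`. -/
def σGt (x : ℝ) (ω : Ω) : ℕ∞ := firstTime (fun n ω => x < W.S n ω) ω

/-- The first passage time `σ^≤(x) = inf {n ≥ 1 : S n ≤ x}` (apply with `x = -x₀`). -/
def σLe (x : ℝ) (ω : Ω) : ℕ∞ := firstTime (fun n ω => W.S n ω ≤ x) ω

/-- The post-`τ(M 0)`-passage time `σ̄^>(x) = inf {n > τ(M 0) : S n > x}`. -/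
def σBarGt (x : ℝ) (ω : Ω) : ℕ∞ :=
  sInf {e : ℕ∞ | ∃ n : ℕ, e = n ∧ W.τ (W.M 0 ω) 1 ω < n ∧ x < W.S n ω}

/-- The level `x` last exit time `ρ(x) = sup {n ≥ 0 : S n ≤ x}`. -/
def lastExit (x : ℝ) (ω : Ω) : ℕ∞ := sSup {e : ℕ∞ | ∃ n : ℕ, e = n ∧ W.S n ω ≤ x}

/-- The epoch `σ_min = inf {n ≥ 1 : S n = inf_{k ≥ 1} S k}` at which the minimum is hit. -/
def σmin (ω : Ω) : ℕ∞ := firstTime (fun n ω => W.S n ω = ⨅ k : ℕ, W.S (k + 1) ω) ω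

/-- `ν(i,x) = inf {n ≥ 1 : S_{τ_n(i)} > x}`. -/
def ν (i : 𝕊) (x : ℝ) (ω : Ω) : ℕ∞ :=
  sInf {e : ℕ∞ | ∃ n : ℕ, e = n ∧ 1 ≤ n ∧ x < W.S (W.τ i n ω) ω}

/-- The renewal counting variable `N(x) = ∑_{n ≥ 1} 1_{S n ≤ x}` (with value in `ℝ≥0∞`). -/
def Ncount (x : ℝ) (ω : Ω) : ℝ≥0∞ := ∑' n : ℕ, if W.S (n + 1) ω ≤ x then 1 else 0

/-- The MRW is of *type `α`* if `E_i τ(i)^{1+α} < ∞` (for all, equivalently some, `i`). -/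
def TypeAlpha (α : ℝ) : Prop := ∀ i, ∫⁻ ω, (W.τ i 1 ω : ℝ≥0∞) ^ (1 + α) ∂W.P i < ⊤

/-- The random walk embedded at `i` is positive divergent. -/
def EmbPD (i : 𝕊) : Prop :=
  ∀ᵐ ω ∂W.P i, Tendsto (fun n => W.S (W.τ i n ω) ω) atTop atTop

/-- The random walk embedded at `i` is negative divergent. -/
def EmbND (i : 𝕊) : Prop :=
  ∀ᵐ ω ∂W.P i, Tendsto (fun n => W.S (W.τ i n ω) ω) atTop atBot

/-- The random walk embedded at `i` oscillates. -/
def EmbOsc (i : 𝕊) : Prop :=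
  ∀ᵐ ω ∂W.P i, OscSeq fun n => W.S (W.τ i n ω) ω

/-- `S_n^⊕ = ∑_{k=1}^n X_k⁺`. -/
def Splus (n : ℕ) (ω : Ω) : ℝ := ∑ k ∈ Finset.range n, max (W.X (k + 1) ω) 0

/-- `S_n^⊖ = ∑_{k=1}^n X_k⁻`. -/
def Sminus (n : ℕ) (ω : Ω) : ℝ := ∑ k ∈ Finset.range n, max (-W.X (k + 1) ω) 0

/-- The strictly ascending ladder epochs `σ_n^>` (`ladderGt 0 = 0`, value `⊤` if there is
no further ladder epoch, in which case all later ones equal `⊤` as well). -/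
def ladderGt : ℕ → Ω → ℕ∞
  | 0, _ => 0
  | n + 1, ω => sInf {e : ℕ∞ | ∃ k : ℕ, e = k ∧ ladderGt n ω < (k : ℕ∞) ∧
      W.S ((ladderGt n ω).toNat) ω < W.S k ω}

/-- The strictly descending ladder epochs `σ_n^<`. -/
def ladderLt : ℕ → Ω → ℕ∞
  | 0, _ => 0
  | n + 1, ω => sInf {e : ℕ∞ | ∃ k : ℕ, e = k ∧ ladderLt n ω < (k : ℕ∞) ∧
      W.S k ω < W.S ((ladderLt n ω).toNat) ω}

/-- The supremum `σ_*` of the finite ladder epochs of the ladder-epoch sequence `lad`. -/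
def ladderFinSup (lad : ℕ → Ω → ℕ∞) (ω : Ω) : ℕ∞ :=
  sSup {e : ℕ∞ | (∃ n, 1 ≤ n ∧ lad n ω = e) ∧ e ≠ ⊤}

/-- The ladder chain associated with the ladder-epoch sequence `lad`:
`M_n^† = M_{σ_n^†}` on `{σ_n^† < ∞}` and `M_n^† = M_{σ_*^†}` on `{σ_n^† = ∞}`. -/
def Mladder (lad : ℕ → Ω → ℕ∞) (n : ℕ) (ω : Ω) : 𝕊 :=
  if lad n ω = ⊤ then W.M ((ladderFinSup lad ω).toNat) ω else W.M ((lad n ω).toNat) ω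

/-- The strictly ascending ladder chain `(M_n^>)`. -/
def Mgt (n : ℕ) (ω : Ω) : 𝕊 := W.Mladder (W.ladderGt) n ω

/-- The strictly descending ladder chain `(M_n^<)`. -/
def Mlt (n : ℕ) (ω : Ω) : 𝕊 := W.Mladder (W.ladderLt) n ω

/-- The function `J_π`: `J_π 0 = 1` and, for `x > 0`,
`J_π x = x / E_π ((X 1 ∧ x)⁺)` if `P_π (X 1 > 0) > 0`, and `J_π x = x` otherwise. -/
def Jπ (x : ℝ) : ℝ :=
  if x = 0 then 1
  else if 0 < W.Pπ {ω | 0 < W.X 1 ω} then x / ∫ ω, max (min (W.X 1 ω) x) 0 ∂W.Pπ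
  else x

/-- `A_π(x) > 0` for all sufficiently large `x`, where
`A_π(x) = E_π ((X 1 ∧ x)⁺) - E_π ((X 1 ∧ x)⁻)` (stated by comparison of the two
`ℝ≥0∞`-valued integrals, since the second one may be infinite). -/
def AπUltPos : Prop :=
  ∃ x₀ : ℝ, ∀ x ≥ x₀,
    ∫⁻ ω, ENNReal.ofReal (max (-min (W.X 1 ω) x) 0) ∂W.Pπ <
      ∫⁻ ω, ENNReal.ofReal (max (min (W.X 1 ω) x) 0) ∂W.Pπ

/-- `W'` is the dual MRW of `W`: same stationary distribution, time-reversed transition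
probabilities `π_i p'_{ij} = π_j p_{ji}`, and reversed increment kernel `K'_{ij} = K_{ji}`. -/
def IsDual {Ω' : Type*} [MeasurableSpace Ω'] (W' : MRW 𝕊 Ω') : Prop :=
  (∀ i, W'.π i = W.π i) ∧ (∀ i j, W.π i * W'.p i j = W.π j * W.p j i) ∧
    (∀ i j, W'.K i j = W.K j i)

/-- The weighted occupation series `∑_{n ≥ 1} n^{α-1} P_i (S n ≤ x)`. -/
def spitzerSeries (α : ℝ) (i : 𝕊) (x : ℝ) : ℝ≥0∞ :=
  ∑' n : ℕ, ((n : ℝ≥0∞) + 1) ^ (α - 1) * W.P i {ω | W.S (n + 1) ω ≤ x}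

/-- `E_i σ^>(x)^β` (infinite if `σ^>(x) = ∞` with positive probability). -/
def EσGt (i : 𝕊) (x : ℝ) (β : ℝ) : ℝ≥0∞ := ∫⁻ ω, (W.σGt x ω : ℝ≥0∞) ^ β ∂W.P i

/-- `E_i σ̄^>(x)^β`. -/
def EσBar (i : 𝕊) (x : ℝ) (β : ℝ) : ℝ≥0∞ := ∫⁻ ω, (W.σBarGt x ω : ℝ≥0∞) ^ β ∂W.P i

/-- `E_i ρ(x)^β`. -/
def Eρ (i : 𝕊) (x : ℝ) (β : ℝ) : ℝ≥0∞ := ∫⁻ ω, (W.lastExit x ω : ℝ≥0∞) ^ β ∂W.P i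

/-- `E_i σ_min^β`. -/
def Eσmin (i : 𝕊) (β : ℝ) : ℝ≥0∞ := ∫⁻ ω, (W.σmin ω : ℝ≥0∞) ^ β ∂W.P i

/-- `E_i [σ^≤(x)^β ; σ^≤(x) < ∞]`. -/
def EσLeFin (i : 𝕊) (x : ℝ) (β : ℝ) : ℝ≥0∞ :=
  ∫⁻ ω, (if W.σLe x ω = ⊤ then 0 else ((W.σLe x ω).toNat : ℝ≥0∞) ^ β) ∂W.P i

/-- `E_i [|S_{σ^≤(x)}|^β ; σ^≤(x) < ∞]`. -/
def ESσLe (i : 𝕊) (x : ℝ) (β : ℝ) : ℝ≥0∞ :=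
  ∫⁻ ω, (if W.σLe x ω = ⊤ then 0
    else ENNReal.ofReal |W.S ((W.σLe x ω).toNat) ω| ^ β) ∂W.P i

/-- `E_i N(x)^β`. -/
def EN (i : 𝕊) (x : ℝ) (β : ℝ) : ℝ≥0∞ := ∫⁻ ω, W.Ncount x ω ^ β ∂W.P i

/-- `E_i [τ_{ν(i,x)}(i)^β]` (infinite when `ν(i,x) = ∞`). -/
def Eτν (i : 𝕊) (x : ℝ) (β : ℝ) : ℝ≥0∞ :=
  ∫⁻ ω, (if W.ν i x ω = ⊤ then (⊤ : ℝ≥0∞)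
    else (W.τ i ((W.ν i x ω).toNat) ω : ℝ≥0∞) ^ β) ∂W.P i

/-- `E_i J_i(D^i)^β`. -/
def EJD (i : 𝕊) (β : ℝ) : ℝ≥0∞ :=
  ∫⁻ ω, ENNReal.ofReal (W.J i (W.D i ω)) ^ β ∂W.P i

/-- `E_i J_i(S_{τ(i)}⁻)^β`. -/
def EJSτneg (i : 𝕊) (β : ℝ) : ℝ≥0∞ :=
  ∫⁻ ω, ENNReal.ofReal (W.J i (W.Sτneg i ω)) ^ β ∂W.P i

/-- `E_i (D^i)^β J_i(D^i)`. -/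
def EDJD (i : 𝕊) (β : ℝ) : ℝ≥0∞ :=
  ∫⁻ ω, ENNReal.ofReal (W.D i ω) ^ β * ENNReal.ofReal (W.J i (W.D i ω)) ∂W.P i

/-- `E_i (S_{τ(i)}⁻)^β J_i(S_{τ(i)}⁻)`. -/
def ESτnegJ (i : 𝕊) (β : ℝ) : ℝ≥0∞ :=
  ∫⁻ ω, ENNReal.ofReal (W.Sτneg i ω) ^ β * ENNReal.ofReal (W.J i (W.Sτneg i ω)) ∂W.P i

/-- `E_i Ĵ_i(S_{τ(i)}⁺)^β` for the reflected walk. -/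
def EJreflSτpos (i : 𝕊) (β : ℝ) : ℝ≥0∞ :=
  ∫⁻ ω, ENNReal.ofReal (W.Jrefl i (W.Sτpos i ω)) ^ β ∂W.P i

/-- `E_i (S_{τ(i)}⁺)^β Ĵ_i(S_{τ(i)}⁺)` for the reflected walk. -/
def ESτposJrefl (i : 𝕊) (β : ℝ) : ℝ≥0∞ :=
  ∫⁻ ω, ENNReal.ofReal (W.Sτpos i ω) ^ β * ENNReal.ofReal (W.Jrefl i (W.Sτpos i ω)) ∂W.P i

/-- `E_i |min_{n ≥ 0} S n|^β`. -/
def EminS (i : 𝕊) (β : ℝ) : ℝ≥0∞ :=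
  ∫⁻ ω, ENNReal.ofReal |⨅ n : ℕ, W.S n ω| ^ β ∂W.P i

/-- `E_π J_π(X_1⁻)^β`. -/
def EJπ (β : ℝ) : ℝ≥0∞ :=
  ∫⁻ ω, ENNReal.ofReal (W.Jπ (max (-W.X 1 ω) 0)) ^ β ∂W.Pπ

/-- `E_π (X_1⁻)^β J_π(X_1⁻)`. -/
def EXnegJπ (β : ℝ) : ℝ≥0∞ :=
  ∫⁻ ω, ENNReal.ofReal (max (-W.X 1 ω) 0) ^ β *
    ENNReal.ofReal (W.Jπ (max (-W.X 1 ω) 0)) ∂W.Pπ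

end MRW

variable {𝕊 : Type*} {Ω : Type*} [Countable 𝕊] [MeasurableSpace 𝕊]
  [MeasurableSingletonClass 𝕊] [MeasurableSpace Ω]

/-!
If `X n = g (M n) - g (M (n - 1))`, the walk telescopes to `S n = g (M n) - g (M 0)`, which
vanishes at every return time of `M` to its starting state.

Conversely, suppose `S_{τ(i)} = 0` `P_i`-a.s. On the event that the first `i`-cycle follows a
fixed path `i = w 0, w 1, …, w m = i` of positive probability, the increments are independent
with laws `K (w k) (w (k + 1))`, and their sum vanishes a.s. Independent variables with a
constant sum are constant, so each of these kernels is a Dirac mass and the Dirac points sum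
to zero along the cycle. By irreducibility every edge of positive probability lies on such a
cycle, and summing the Dirac points along a fixed path from each state to `i` gives a
potential `g` with `K a b = δ (g b - g a)`.
-/

namespace MeasureTheory.Measure

theorem eq_dirac_of_ae_eq {α : Type*} [MeasurableSpace α] {μ : Measure α}
    [IsProbabilityMeasure μ] {d : α} (h : ∀ᵐ y ∂μ, y = d) : μ = dirac d :=
  calc μ = μ.map id := map_id.symm
    _ = μ.map fun _ => d := map_congr h
    _ = dirac d := by rw [map_const, measure_univ, one_smul]

theorem exists_eq_dirac_of_ae_prod_fst_eq {α β : Type*} [MeasurableSpace α]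
    [MeasurableSpace β] {μ : Measure α} {ν : Measure β} [IsProbabilityMeasure μ]
    [IsProbabilityMeasure ν] {f : β → α} (h : ∀ᵐ q ∂μ.prod ν, q.1 = f q.2) :
    ∃ d, μ = dirac d := by
  have hfib : ∀ᵐ y ∂μ, ∀ᵐ z ∂ν, y = f z := ae_ae_of_ae_prod h
  obtain ⟨d, hd⟩ := hfib.exists
  refine ⟨d, eq_dirac_of_ae_eq ?_⟩
  filter_upwards [hfib] with y hy
  obtain ⟨z, hyz, hdz⟩ := (hy.and hd).exists
  exact hyz.trans hdz.symm

theorem exists_eq_dirac_of_ae_pi_sum_eq {E : Type*} [AddCommGroup E] [MeasurableSpace E]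
    [MeasurableSingletonClass E] {m : ℕ} (μ : Fin m → Measure E)
    [∀ k, IsProbabilityMeasure (μ k)] {c : E} (h : ∀ᵐ x ∂Measure.pi μ, ∑ k, x k = c) :
    ∃ d : Fin m → E, (∀ k, μ k = dirac (d k)) ∧ ∑ k, d k = c := by
  have hdirac : ∀ k, ∃ d, μ k = dirac d := by
    cases m with
    | zero => exact fun k => k.elim0
    | succ n =>
      intro k
      have hmp := measurePreserving_piFinSuccAbove μ k
      refine exists_eq_dirac_of_ae_prod_fst_eq (ν := Measure.pi fun j => μ (k.succAbove j))
        (f := fun z => c - ∑ j, z j) ?_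
      rw [← hmp.map_eq,
        (MeasurableEquiv.piFinSuccAbove (fun _ => E) k).measurableEmbedding.ae_map_iff]
      filter_upwards [h] with x hx
      rw [Fin.sum_univ_succAbove _ k] at hx
      exact eq_sub_of_add_eq hx
  choose d hd using hdirac
  refine ⟨d, hd, ?_⟩
  have hcoord : ∀ᵐ x ∂Measure.pi μ, ∀ k, x k = d k := by
    refine ae_all_iff.2 fun k => (tendsto_eval_ae_ae (i := k)).eventually (p := (· = d k)) ?_
    rw [hd k, ae_dirac_eq]
    rfl
  obtain ⟨x, hx, hxd⟩ := (h.and hcoord).exists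
  simpa [funext hxd] using hx

end MeasureTheory.Measure

section Paths

variable {α : Type*}

@[to_additive]
def pathProd {M : Type*} [CommMonoid M] (f : α → α → M) (n : ℕ) (w : ℕ → α) : M :=
  ∏ k ∈ Finset.range n, f (w k) (w (k + 1))

def pathAppend (n : ℕ) (u v : ℕ → α) (k : ℕ) : α := if k ≤ n then u k else v (k - n)

variable {n m : ℕ} {u v : ℕ → α}

theorem pathAppend_of_le {k : ℕ} (h : k ≤ n) : pathAppend n u v k = u k := if_pos h

theorem pathAppend_add (h : u n = v 0) (k : ℕ) : pathAppend n u v (n + k) = v k := by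
  rcases k.eq_zero_or_pos with rfl | hk
  · simpa [pathAppend] using h
  · simp [pathAppend, show ¬n + k ≤ n by omega]

@[to_additive]
theorem pathProd_append {M : Type*} [CommMonoid M] (f : α → α → M) (h : u n = v 0) :
    pathProd f (n + m) (pathAppend n u v) = pathProd f n u * pathProd f m v := by
  rw [pathProd, Finset.prod_range_add]
  congr 1
  · refine Finset.prod_congr rfl fun k hk => ?_
    have hk := Finset.mem_range.1 hk
    rw [pathAppend_of_le hk.le, pathAppend_of_le hk]
  · refine Finset.prod_congr rfl fun k _ => ?_
    rw [pathAppend_add h, add_assoc, pathAppend_add h]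

theorem pathAppend_ne {i : α} (h : u n = v 0) (hu : ∀ k, 0 < k → k ≤ n → u k ≠ i)
    (hv : ∀ k, 0 < k → k < m → v k ≠ i) :
    ∀ k, 0 < k → k < n + m → pathAppend n u v k ≠ i := by
  intro k hk0 hk
  rcases le_or_gt k n with hkn | hnk
  · rw [pathAppend_of_le hkn]
    exact hu k hk0 hkn
  · obtain ⟨j, rfl⟩ := Nat.exists_eq_add_of_lt hnk
    rw [add_assoc, pathAppend_add h]
    exact hv _ (by omega) (by omega)

end Paths

namespace MRW

variable (W : MRW 𝕊 Ω)

instance (i : 𝕊) : IsProbabilityMeasure (W.P i) := W.isProb i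

instance (a b : 𝕊) : IsProbabilityMeasure (W.K a b) := W.Kprob a b

def cyl (n : ℕ) (w : ℕ → 𝕊) : Set Ω := {ω | ∀ k ≤ n, W.M k ω = w k}

def increments (m : ℕ) (ω : Ω) (k : Fin m) : ℝ := W.X (k + 1) ω

structure IsReturnCycle (i : 𝕊) (m : ℕ) (w : ℕ → 𝕊) : Prop where
  start : w 0 = i
  finish : w m = i
  avoid : ∀ k, 0 < k → k < m → w k ≠ i
  pos : pathProd W.p m w ≠ 0

structure IsPathFrom (i : 𝕊) (n : ℕ) (u : ℕ → 𝕊) : Prop where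
  start : u 0 = i
  avoid : ∀ k, 0 < k → k ≤ n → u k ≠ i
  pos : pathProd W.p n u ≠ 0

structure IsPathTo (i : 𝕊) (n : ℕ) (v : ℕ → 𝕊) : Prop where
  finish : v n = i
  avoid : ∀ k < n, v k ≠ i
  pos : pathProd W.p n v ≠ 0

variable {W}

theorem measurableSet_cyl (n : ℕ) (w : ℕ → 𝕊) : MeasurableSet (W.cyl n w) := by
  simp only [cyl, Set.ofPred_forall]
  exact .iInter fun k => .iInter fun _ => W.measM k (measurableSet_singleton _)

theorem measurable_increments (m : ℕ) : Measurable (W.increments m) :=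
  measurable_pi_lambda _ fun _ => W.measX _

theorem sum_increments (m : ℕ) (ω : Ω) : ∑ k, W.increments m ω k = W.S m ω :=
  Fin.sum_univ_eq_sum_range (fun k => W.X (k + 1) ω) m

theorem measure_cyl (i : 𝕊) (n : ℕ) (w : ℕ → 𝕊) :
    W.P i (W.cyl n w) = (if w 0 = i then 1 else 0) * pathProd W.p n w := by
  simpa [cyl, pathProd] using
    W.pathLaw i n w (fun _ => univ) (fun _ => MeasurableSet.univ)

theorem measure_eq_zero_of_forall_cyl_inter {i : 𝕊} {s : Set Ω} (n : ℕ)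
    (hs : ∀ w, W.P i (W.cyl n w ∩ s) = 0) : W.P i s = 0 := by
  let extend (v : Fin (n + 1) → 𝕊) (k : ℕ) : 𝕊 := v ⟨min k n, by omega⟩
  refine measure_mono_null (fun ω hω => ?_) (measure_iUnion_null fun v => hs (extend v))
  refine mem_iUnion.2 ⟨fun k => W.M k ω, fun k hk => ?_, hω⟩
  simp [extend, min_eq_left hk]

theorem measure_cyl_inter_increments_preimage_pi {i : 𝕊} {m : ℕ} {w : ℕ → 𝕊} (h0 : w 0 = i)
    {s : Fin m → Set ℝ} (hs : ∀ k, MeasurableSet (s k)) :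
    W.P i (W.cyl m w ∩ W.increments m ⁻¹' univ.pi s) =
      pathProd W.p m w * ∏ k : Fin m, W.K (w k) (w (k + 1)) (s k) := by
  let B (j : ℕ) : Set ℝ := if h : j - 1 < m then s ⟨j - 1, h⟩ else univ
  have hB : ∀ j, MeasurableSet (B j) := fun j => by
    by_cases h : j - 1 < m <;> simp [B, h, hs]
  have hevent : W.cyl m w ∩ W.increments m ⁻¹' univ.pi s =
      {ω | (∀ k ≤ m, W.M k ω = w k) ∧ ∀ j, 1 ≤ j → j ≤ m → W.X j ω ∈ B j} := by
    ext ω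
    simp only [cyl, increments, mem_inter_iff, mem_preimage, mem_univ_pi, mem_ofPred_eq]
    refine and_congr_right fun _ => ⟨fun hX j hj1 hjm => ?_, fun hX k => ?_⟩
    · obtain ⟨k, rfl⟩ := Nat.exists_eq_add_of_le' hj1
      simpa [B, show k < m by omega] using hX ⟨k, by omega⟩
    · simpa [B] using hX (k + 1) (by omega) k.isLt
  rw [hevent, W.pathLaw i m w B hB, if_pos h0, one_mul, Finset.prod_mul_distrib, pathProd,
    ← Fin.prod_univ_eq_prod_range (fun k => W.K (w k) (w (k + 1)) (B (k + 1)))]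
  simp [B]

theorem map_increments_restrict_cyl {i : 𝕊} {m : ℕ} {w : ℕ → 𝕊} (h0 : w 0 = i) :
    ((W.P i).restrict (W.cyl m w)).map (W.increments m) =
      pathProd W.p m w • Measure.pi fun k : Fin m => W.K (w k) (w (k + 1)) := by
  have hbox : ∀ s : Fin m → Set ℝ, (∀ k, MeasurableSet (s k)) →
      ((W.P i).restrict (W.cyl m w)).map (W.increments m) (univ.pi s) =
        (pathProd W.p m w • Measure.pi fun k : Fin m => W.K (w k) (w (k + 1))) (univ.pi s) := by
    intro s hs
    rw [Measure.map_apply (measurable_increments m) (.univ_pi hs),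
      Measure.restrict_apply (measurable_increments m (.univ_pi hs)), inter_comm,
      measure_cyl_inter_increments_preimage_pi h0 hs, Measure.smul_apply, Measure.pi_pi,
      smul_eq_mul]
  refine ext_of_generate_finite _ generateFrom_pi.symm isPiSystem_pi ?_ ?_
  · rintro _ ⟨s, hs, rfl⟩
    exact hbox s fun k => hs k (mem_univ k)
  · simpa using hbox (fun _ => univ) fun _ => .univ

theorem τ_one_eq_of_mem_cyl {i : 𝕊} {m : ℕ} {w : ℕ → 𝕊} (hm : 0 < m) (hfin : w m = i)
    (havoid : ∀ k, 0 < k → k < m → w k ≠ i) {ω : Ω} (hω : ω ∈ W.cyl m w) :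
    W.τ i 1 ω = m := by
  have hmem : m ∈ {k | W.τ i 0 ω < k ∧ W.M k ω = i} := ⟨hm, (hω m le_rfl).trans hfin⟩
  refine le_antisymm (Nat.sInf_le hmem) (not_lt.1 fun hlt => ?_)
  obtain ⟨hpos, hM⟩ := Nat.sInf_mem ⟨m, hmem⟩
  exact havoid _ hpos hlt ((hω _ hlt.le).symm.trans hM)

theorem ae_sum_eq_zero_of_isReturnCycle {i : 𝕊} (hb : ∀ᵐ ω ∂W.P i, W.Sτ i ω = 0) {m : ℕ}
    {w : ℕ → 𝕊} (hw : W.IsReturnCycle i m w) (hm : 0 < m) :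
    ∀ᵐ x ∂Measure.pi (fun k : Fin m => W.K (w k) (w (k + 1))), ∑ k, x k = 0 := by
  have hE : MeasurableSet {x : Fin m → ℝ | ∑ k, x k ≠ 0} :=
    (Finset.measurable_sum _ fun k _ => measurable_pi_apply k) (measurableSet_singleton 0).compl
  have hnull : W.P i (W.increments m ⁻¹' {x | ∑ k, x k ≠ 0} ∩ W.cyl m w) = 0 := by
    refine measure_mono_null (fun ω ⟨hS, hω⟩ => ?_) (ae_iff.1 hb)
    rw [mem_preimage, mem_ofPred_eq, sum_increments] at hS
    rwa [mem_ofPred_eq, Sτ, τ_one_eq_of_mem_cyl hm hw.finish hw.avoid hω]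
  rw [← Measure.restrict_apply (measurable_increments m hE),
    ← Measure.map_apply (measurable_increments m) hE, map_increments_restrict_cyl hw.start,
    Measure.smul_apply, smul_eq_mul] at hnull
  exact ae_iff.2 ((mul_eq_zero.1 hnull).resolve_left hw.pos)

theorem pathSum_eq_zero_of_isReturnCycle {i : 𝕊} (hb : ∀ᵐ ω ∂W.P i, W.Sτ i ω = 0)
    {c : 𝕊 → 𝕊 → ℝ} (hc : ∀ a b, W.p a b ≠ 0 → W.K a b = Measure.dirac (c a b)) {m : ℕ}
    {w : ℕ → 𝕊} (hw : W.IsReturnCycle i m w) : pathSum c m w = 0 := by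
  rcases m.eq_zero_or_pos with rfl | hm
  · simp [pathSum]
  obtain ⟨d, hd, hsum⟩ :=
    Measure.exists_eq_dirac_of_ae_pi_sum_eq _ (W.ae_sum_eq_zero_of_isReturnCycle hb hw hm)
  have hedge : ∀ k < m, W.p (w k) (w (k + 1)) ≠ 0 := fun k hk =>
    Finset.prod_ne_zero_iff.1 hw.pos k (Finset.mem_range.2 hk)
  rw [pathSum, ← Fin.sum_univ_eq_sum_range (fun k => c (w k) (w (k + 1))), ← hsum]
  refine Finset.sum_congr rfl fun k _ => dirac_eq_dirac_iff.1 ?_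
  rw [← hc _ _ (hedge k k.isLt), hd]

theorem ae_M_zero_eq (i : 𝕊) : ∀ᵐ ω ∂W.P i, W.M 0 ω = i := by
  have h := W.measure_cyl i 0 fun _ => i
  rw [if_pos rfl, one_mul, pathProd, Finset.prod_range_zero, ← measure_univ (μ := W.P i)] at h
  exact ((ae_iff_measure_eq (measurableSet_cyl 0 _).nullMeasurableSet).2 h).mono
    fun ω hω => hω 0 le_rfl

theorem ae_frequently_M_eq (i j : 𝕊) : ∀ᵐ ω ∂W.P i, ∀ N, ∃ n ≥ N, W.M n ω = j := by
  have hmeas : MeasurableSet {ω | ∀ N, ∃ n ≥ N, W.M n ω = j} := by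
    simp only [Set.ofPred_forall, Set.ofPred_exists, Set.ofPred_and]
    exact .iInter fun N => .iUnion fun n => (MeasurableSet.const _).inter
      (W.measM n (measurableSet_singleton j))
  rw [ae_iff_measure_eq hmeas.nullMeasurableSet, measure_univ]
  exact W.recurrent i j

theorem exists_path (i j : 𝕊) :
    ∃ n w, w 0 = i ∧ w n = j ∧ pathProd W.p n w ≠ 0 := by
  obtain ⟨n, hn⟩ : ∃ n, W.P i {ω | W.M n ω = j} ≠ 0 := by
    by_contra! h
    have hnever : ∀ᵐ ω ∂W.P i, ∀ n, W.M n ω ≠ j :=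
      ae_all_iff.2 fun n => measure_eq_zero_iff_ae_notMem.1 (h n)
    obtain ⟨ω, hω, hrec⟩ := (hnever.and (W.ae_frequently_M_eq i j)).exists
    obtain ⟨n, -, hn⟩ := hrec 0
    exact hω n hn
  obtain ⟨w, hw⟩ : ∃ w, W.P i (W.cyl n w ∩ {ω | W.M n ω = j}) ≠ 0 := by
    by_contra! h
    exact hn (measure_eq_zero_of_forall_cyl_inter n h)
  obtain ⟨ω, hω, hωj⟩ := nonempty_of_measure_ne_zero hw
  have hcyl : W.P i (W.cyl n w) ≠ 0 := fun h0 => hw (measure_mono_null inter_subset_left h0)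
  rw [measure_cyl] at hcyl
  refine ⟨n, w, ?_, (hω n le_rfl).symm.trans hωj, right_ne_zero_of_mul hcyl⟩
  by_contra h0
  simp [h0] at hcyl

theorem exists_isPathFrom (i a : 𝕊) : ∃ n u, u n = a ∧ W.IsPathFrom i n u := by
  obtain ⟨n, w, h0, hn, hpos⟩ := W.exists_path i a
  let s := Nat.findGreatest (fun k => w k = i) n
  have hs : w s = i := Nat.findGreatest_spec (P := fun k => w k = i) (Nat.zero_le n) h0
  have hsn : s ≤ n := Nat.findGreatest_le n
  refine ⟨n - s, fun k => w (s + k), by simpa [Nat.add_sub_cancel' hsn], hs, ?_, ?_⟩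
  · exact fun k hk hkn => Nat.findGreatest_is_greatest (P := fun k => w k = i) (n := n)
      (Nat.lt_add_of_pos_right hk) (by omega)
  · rw [pathProd, Finset.prod_ne_zero_iff] at hpos ⊢
    exact fun k hk => hpos (s + k) (Finset.mem_range.2 (by simp at hk; omega))

theorem exists_isPathTo (a i : 𝕊) : ∃ n v, v 0 = a ∧ W.IsPathTo i n v := by
  obtain ⟨n, w, h0, hn, hpos⟩ := W.exists_path a i
  have hi : ∃ k, w k = i := ⟨n, hn⟩
  refine ⟨Nat.find hi, w, h0, Nat.find_spec hi, fun k hk => Nat.find_min hi hk, ?_⟩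
  rw [pathProd, Finset.prod_ne_zero_iff] at hpos ⊢
  exact fun k hk => hpos k (Finset.mem_range.2 ((Finset.mem_range.1 hk).trans_le
    (Nat.find_min' hi hn)))

theorem isReturnCycle_pathAppend {i : 𝕊} {n m : ℕ} {u v : ℕ → 𝕊} (hu : W.IsPathFrom i n u)
    (h : u n = v 0) (hfin : v m = i) (havoid : ∀ k, 0 < k → k < m → v k ≠ i)
    (hpos : pathProd W.p m v ≠ 0) : W.IsReturnCycle i (n + m) (pathAppend n u v) where
  start := by rw [pathAppend_of_le (Nat.zero_le n), hu.start]
  finish := by rw [pathAppend_add h, hfin]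
  avoid := pathAppend_ne h hu.avoid havoid
  pos := by
    rw [pathProd_append _ h]
    exact mul_ne_zero hu.pos hpos

theorem IsPathFrom.isReturnCycle_append {i : 𝕊} {n m : ℕ} {u v : ℕ → 𝕊}
    (hu : W.IsPathFrom i n u) (hv : W.IsPathTo i m v) (h : u n = v 0) :
    W.IsReturnCycle i (n + m) (pathAppend n u v) :=
  isReturnCycle_pathAppend hu h hv.finish (fun k _ hk => hv.avoid k hk) hv.pos

theorem IsPathFrom.isReturnCycle_append_edge {i : 𝕊} {n m : ℕ} {u v : ℕ → 𝕊}
    (hu : W.IsPathFrom i n u) (hv : W.IsPathTo i m v) (hab : W.p (u n) (v 0) ≠ 0) :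
    W.IsReturnCycle i (n + (1 + m))
      (pathAppend n u (pathAppend 1 (fun k => if k = 0 then u n else v 0) v)) := by
  set e : ℕ → 𝕊 := fun k => if k = 0 then u n else v 0
  have he : e 1 = v 0 := rfl
  refine isReturnCycle_pathAppend hu (by simp [pathAppend, e])
    (by rw [pathAppend_add he, hv.finish]) (fun k hk0 hk => ?_) ?_
  · obtain ⟨j, rfl⟩ : ∃ j, k = 1 + j := ⟨k - 1, by omega⟩
    rw [pathAppend_add he]
    exact hv.avoid j (by omega)
  · rw [pathProd_append _ he]
    exact mul_ne_zero (by simpa [pathProd, e] using hab) hv.pos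

theorem exists_potential {i : 𝕊} (hb : ∀ᵐ ω ∂W.P i, W.Sτ i ω = 0) :
    ∃ g : 𝕊 → ℝ, ∀ a b, W.p a b ≠ 0 → W.K a b = Measure.dirac (g b - g a) := by
  choose lu u hua hu using W.exists_isPathFrom i
  choose lv v hvb hv using fun a => W.exists_isPathTo a i
  have hcycle : ∀ a b, W.p a b ≠ 0 → W.IsReturnCycle i (lu a + (1 + lv b))
      (pathAppend (lu a) (u a) (pathAppend 1 (fun k => if k = 0 then a else b) (v b))) :=
    fun a b hab => by
      simpa [hua, hvb] using (hu a).isReturnCycle_append_edge (hv b) (by rwa [hua, hvb])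
  have hdirac : ∀ a b, ∃ c, W.p a b ≠ 0 → W.K a b = Measure.dirac c := by
    intro a b
    by_cases hab : W.p a b = 0
    · exact ⟨0, fun h => (h hab).elim⟩
    obtain ⟨d, hd, -⟩ := Measure.exists_eq_dirac_of_ae_pi_sum_eq _
      (W.ae_sum_eq_zero_of_isReturnCycle hb (hcycle a b hab) (by omega))
    refine ⟨d ⟨lu a, by omega⟩, fun _ => ?_⟩
    simpa [pathAppend, hua] using hd ⟨lu a, by omega⟩
  choose c hc using hdirac
  -- The loop `u a, v a` and the cycle `u a, (a, b), v b` share `u a`, so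
  -- `c a b = pathSum c (v a) - pathSum c (v b)`.
  refine ⟨fun x => -pathSum c (lv x) (v x), fun a b hab => ?_⟩
  have hloop := W.pathSum_eq_zero_of_isReturnCycle hb hc
    ((hu a).isReturnCycle_append (hv a) (by rw [hua, hvb]))
  have hedge := W.pathSum_eq_zero_of_isReturnCycle hb hc (hcycle a b hab)
  rw [pathSum_append _ (by rw [hua, hvb])] at hloop
  rw [pathSum_append _ (by simp [pathAppend, hua]), pathSum_append _ (by simp [hvb])] at hedge
  have hstep : pathSum c 1 (fun k => if k = 0 then a else b) = c a b := by simp [pathSum]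
  rw [hc a b hab]
  congr 1
  linarith

theorem ae_X_eq_of_kernel_eq_dirac {g : 𝕊 → ℝ}
    (hg : ∀ a b, W.p a b ≠ 0 → W.K a b = Measure.dirac (g b - g a)) (j : 𝕊) (n : ℕ) :
    ∀ᵐ ω ∂W.P j, W.X (n + 1) ω = g (W.M (n + 1) ω) - g (W.M n ω) := by
  refine ae_iff.2 (measure_eq_zero_of_forall_cyl_inter (n + 1) fun w => ?_)
  let B (k : ℕ) : Set ℝ := if k = n + 1 then {g (w (n + 1)) - g (w n)}ᶜ else univ
  have hB : ∀ k, MeasurableSet (B k) := fun k => by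
    by_cases hk : k = n + 1 <;> simp [B, hk]
  refine measure_mono_null (fun ω ⟨hω, hX⟩ => (⟨hω, fun k _ hk => ?_⟩ : _ ∧ _))
    ((W.pathLaw j (n + 1) w B hB).trans ?_)
  · by_cases hkn : k = n + 1
    · subst hkn
      simpa [B, hω (n + 1) le_rfl, hω n (by omega)] using hX
    · simp [B, hkn]
  · refine mul_eq_zero_of_right _ (Finset.prod_eq_zero (Finset.self_mem_range_succ n) ?_)
    by_cases hp : W.p (w n) (w (n + 1)) = 0
    · rw [hp, zero_mul]
    · simp [B, hg _ _ hp]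

theorem ae_Pπ_iff {q : Ω → Prop} : (∀ᵐ ω ∂W.Pπ, q ω) ↔ ∀ i, ∀ᵐ ω ∂W.P i, q ω := by
  simp only [Pπ, Measure.ae_sum_eq, Filter.eventually_iSup, ae_iff, Measure.smul_apply,
    smul_eq_mul, mul_eq_zero, (W.πpos _).ne', false_or]

theorem nullHomologous_of_ae_Sτ_eq_zero {i : 𝕊} (hb : ∀ᵐ ω ∂W.P i, W.Sτ i ω = 0) :
    W.NullHomologous := by
  obtain ⟨g, hg⟩ := W.exists_potential hb
  refine ⟨g, fun n hn => W.ae_Pπ_iff.2 fun j => ?_⟩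
  obtain ⟨n, rfl⟩ := Nat.exists_eq_add_of_le' hn
  exact W.ae_X_eq_of_kernel_eq_dirac hg j n

theorem S_eq_sub_of_X_eq {g : 𝕊 → ℝ} {ω : Ω}
    (hX : ∀ n, W.X (n + 1) ω = g (W.M (n + 1) ω) - g (W.M n ω)) (n : ℕ) :
    W.S n ω = g (W.M n ω) - g (W.M 0 ω) := by
  simp only [S, hX]
  exact Finset.sum_range_sub (fun k => g (W.M k ω)) n

theorem M_τ_succ_eq {i : 𝕊} {ω : Ω} (hrec : ∀ N, ∃ n ≥ N, W.M n ω = i) (n : ℕ) :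
    W.M (W.τ i (n + 1) ω) ω = i := by
  obtain ⟨k, hk, hMk⟩ := hrec (W.τ i n ω + 1)
  exact (Nat.sInf_mem (s := {k | W.τ i n ω < k ∧ W.M k ω = i}) ⟨k, hk, hMk⟩).2

theorem ae_S_τ_eq_zero_of_nullHomologous (h : W.NullHomologous) (i : 𝕊) (n : ℕ) :
    ∀ᵐ ω ∂W.P i, W.S (W.τ i n ω) ω = 0 := by
  obtain ⟨g, hg⟩ := h
  have hX : ∀ᵐ ω ∂W.P i, ∀ n, W.X (n + 1) ω = g (W.M (n + 1) ω) - g (W.M n ω) :=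
    ae_all_iff.2 fun n => W.ae_Pπ_iff.1 (hg (n + 1) le_add_self) i
  filter_upwards [hX, W.ae_M_zero_eq i, W.ae_frequently_M_eq i i] with ω hXω hM0 hrec
  cases n with
  | zero => simp [τ, S]
  | succ n => rw [S_eq_sub_of_X_eq hXω, M_τ_succ_eq hrec, hM0, sub_self]

end MRW

/-- An MRW is null-homologous iff the random walk embedded at some (equivalently, every)
state `i` has zero increments, i.e. `S_{τ_n(i)} = 0` `P_i`-a.s. for all `n`. -/
theorem null_homologous_iff_embedded_zero (W : MRW 𝕊 Ω) :
    [W.NullHomologous,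
      ∃ i, ∀ n : ℕ, ∀ᵐ ω ∂W.P i, W.S (W.τ i n ω) ω = 0,
      ∀ i, ∀ n : ℕ, ∀ᵐ ω ∂W.P i, W.S (W.τ i n ω) ω = 0].TFAE := by
  tfae_have 1 → 3 := W.ae_S_τ_eq_zero_of_nullHomologous
  tfae_have 3 → 2 := fun h => by
    have : Nonempty 𝕊 := by
      by_contra h𝕊
      simpa [not_nonempty_iff.1 h𝕊] using W.πsum
    exact ⟨Classical.arbitrary 𝕊, h _⟩
  tfae_have 2 → 1 := fun ⟨i, h⟩ => W.nullHomologous_of_ae_Sτ_eq_zero (h 1)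
  tfae_finish
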